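/- arXiv:2205.06565 — 9 statements merged into one kernel-verified Lean document; each statement's English description precedes it below -/
import Mathlib

section
/- For any finite graph G = (V,E) and all real q and w, the polynomial identity Z_G(q,w) = Σ_{S⊆V} (1+w)^{e(S)} Z_{G−S}(q−1,w) holds, where e(S) is the number of edges induced by S and G−S is the subgraph induced by V∖S. -/
/-!
Write `q ^ k(A) = (1 + (q - 1)) ^ k(A)` and expand over the sets of components of `(V, A)`:
a set of components corresponds to the vertex set `S` of the components *not* chosen, so
`q ^ k(A)` is the sum of `(q - 1) ^ k` over the vertex sets `S` that are unions of components
of `(V, A)`, where `k` counts the components of `(V ∖ S, A)`. Swapping the sums, the edge sets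
`A ⊆ E` for which a fixed `S` is a union of components are exactly the subsets of
`E(S) ∪ E(G - S)`. The part of `A` inside `S` only contributes its weight `w ^ |A ∩ E(S)|`,
summing to `(1 + w) ^ e(S)`, and the part inside `V ∖ S` gives `Z_{G-S}(q - 1, w)`.
-/

open Finset

/-- The number of connected components of the spanning subgraph `(V, A)`. -/
noncomputable def numComponents {V : Type*} (A : Finset (Sym2 V)) : ℕ :=
  Nat.card (SimpleGraph.fromEdgeSet (↑A : Set (Sym2 V))).ConnectedComponent

/-- The partition function of the random cluster model. -/
noncomputable def rcPartition {V : Type*} [Fintype V] [DecidableEq V]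
    (G : SimpleGraph V) [DecidableRel G.Adj] (q w : ℝ) : ℝ :=
  ∑ A ∈ G.edgeFinset.powerset, q ^ numComponents A * w ^ A.card

/-- The number of edges of `G` induced by the vertex set `S`. -/
noncomputable def inducedEdgeCount {V : Type*} [Fintype V] [DecidableEq V]
    (G : SimpleGraph V) [DecidableRel G.Adj] (S : Finset V) : ℕ :=
  (G.edgeFinset.filter (fun e => ∀ v ∈ e, v ∈ S)).card

instance {V : Type*} (G : SimpleGraph V) [DecidableRel G.Adj] (s : Set V) :
    DecidableRel (SimpleGraph.induce s G).Adj :=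
  fun a b => inferInstanceAs (Decidable (G.Adj a b))

namespace Finset

variable {α β M : Type*} [AddCommMonoid M]

lemma sum_powerset_pow_card {R : Type*} [CommSemiring R] (s : Finset α) (x : R) :
    ∑ t ∈ s.powerset, x ^ #t = (1 + x) ^ #s := by
  simpa [add_comm] using sum_pow_mul_eq_add_pow x 1 s

lemma powerset_map (f : α ↪ β) (s : Finset α) :
    (s.map f).powerset = s.powerset.map (mapEmbedding f).toEmbedding := by
  ext t
  simp [subset_map_iff, eq_comm]

lemma sum_powerset_union_of_disjoint [DecidableEq α] {s t : Finset α} (h : Disjoint s t)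
    (f : Finset α → M) :
    ∑ A ∈ (s ∪ t).powerset, f A = ∑ B ∈ s.powerset, ∑ C ∈ t.powerset, f (B ∪ C) := by
  rw [powerset_union]
  change ∑ A ∈ image₂ (· ∪ ·) _ _, f A = _
  rw [← image_uncurry_product, sum_image, sum_product]
  · rfl
  rintro ⟨B, C⟩ hBC ⟨B', C'⟩ hBC' heq
  simp only [coe_product, Set.mem_prod, mem_coe, mem_powerset] at hBC hBC'
  have hs := disjoint_left.1 h
  simp only [Function.uncurry_apply_pair, Finset.ext_iff, mem_union] at heq
  simp only [Prod.mk.injEq, Finset.ext_iff]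
  constructor <;> intro x <;> have := heq x <;> grind

lemma disjoint_sym2_compl [Fintype α] [DecidableEq α] (s : Finset α) :
    Disjoint s.sym2 sᶜ.sym2 := by
  rw [disjoint_left]
  intro e he he'
  induction e with
  | _ a b => simp_all

end Finset

namespace SimpleGraph

variable {V : Type*}

def AdjClosed (H : SimpleGraph V) (s : Set V) : Prop :=
  ∀ ⦃u v⦄, H.Adj u v → u ∈ s → v ∈ s

namespace AdjClosed

variable {H : SimpleGraph V} {s : Set V}

lemma compl (h : H.AdjClosed s) : H.AdjClosed sᶜ :=
  fun _ _ huv hu hv => hu (h huv.symm hv)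

lemma support_subset (h : H.AdjClosed s) {u v : V} (p : H.Walk u v) (hu : u ∈ s) :
    ∀ x ∈ p.support, x ∈ s := by
  induction p with
  | nil => simpa
  | cons huv _ ih => simpa [hu] using ih (h huv hu)

lemma mem_of_reachable (h : H.AdjClosed s) {u v : V} (huv : H.Reachable u v) (hu : u ∈ s) :
    v ∈ s :=
  let ⟨p⟩ := huv
  h.support_subset p hu v p.end_mem_support

lemma reachable_induce (h : H.AdjClosed s) {u v : s} (huv : H.Reachable u v) :
    (H.induce s).Reachable u v :=
  let ⟨p⟩ := huv
  ⟨p.induce s (h.support_subset p u.2)⟩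

open Classical in
lemma card_connectedComponent_induce [DecidableEq V] {U : Finset V} (h : H.AdjClosed U) :
    Nat.card (H.induce U).ConnectedComponent = #(U.image H.connectedComponentMk) := by
  set f := ConnectedComponent.map (Embedding.induce (U : Set V)).toHom
  have hf : Function.Injective f := by
    refine ConnectedComponent.ind₂ fun a b hab => ConnectedComponent.sound ?_
    exact h.reachable_induce (ConnectedComponent.exact hab)
  have hrange : Set.range f = ↑(U.image H.connectedComponentMk) := by
    ext c
    constructor
    · rintro ⟨d, rfl⟩
      induction d using ConnectedComponent.ind with
      | h a => exact Finset.mem_image_of_mem _ a.2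
    · simp only [coe_image, Set.mem_image, Finset.mem_coe]
      rintro ⟨v, hv, rfl⟩
      exact ⟨(H.induce U).connectedComponentMk ⟨v, hv⟩, rfl⟩
  rw [← Nat.card_range_of_injective hf, hrange, Nat.card_coe_set_eq, Set.ncard_coe_finset]

end AdjClosed

open Classical in
theorem sum_adjClosed_pow_card [Fintype V] [DecidableEq V] {R : Type*} [CommSemiring R]
    (H : SimpleGraph V) (x : R) :
    ∑ S ∈ univ.filter (fun S : Finset V => H.AdjClosed ↑S),
        x ^ Nat.card (H.induce (↑(Sᶜ) : Set V)).ConnectedComponent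
      = (1 + x) ^ Nat.card H.ConnectedComponent := by
  have : Fintype H.ConnectedComponent := Fintype.ofFinite _
  calc ∑ S ∈ univ.filter (fun S : Finset V => H.AdjClosed ↑S),
          x ^ Nat.card (H.induce (↑(Sᶜ) : Set V)).ConnectedComponent
      _ = ∑ S ∈ univ.filter (fun S : Finset V => H.AdjClosed ↑S),
            x ^ #((Sᶜ).image H.connectedComponentMk) := by
        refine sum_congr rfl fun S hS => ?_
        have hS : H.AdjClosed ↑(Sᶜ) := coe_compl S ▸ (mem_filter.1 hS).2.compl
        rw [hS.card_connectedComponent_induce]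
      _ = ∑ T ∈ (univ : Finset H.ConnectedComponent).powerset, x ^ #T := by
        refine sum_nbij' (fun S => (Sᶜ).image H.connectedComponentMk)
          (fun T => univ.filter fun v => H.connectedComponentMk v ∉ T) (by simp) ?_ ?_ ?_
          (fun _ _ => rfl)
        · intro T _
          refine mem_filter.2 ⟨mem_univ _, fun u v huv hu => ?_⟩
          simpa [ConnectedComponent.connectedComponentMk_eq_of_adj huv] using hu
        · intro S hS
          ext v
          simp only [mem_compl, mem_image, not_exists, not_and, mem_filter, mem_univ, true_and]
          refine ⟨fun hv => by_contra fun hvS => hv v hvS rfl, fun hvS u huS huv => ?_⟩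
          exact (mem_filter.1 hS).2.compl.mem_of_reachable (ConnectedComponent.exact huv) huS hvS
        · intro T _
          ext c
          induction c using ConnectedComponent.ind with | h v => ?_
          simp only [compl_filter, not_not, mem_image, mem_filter, mem_univ, true_and]
          exact ⟨fun ⟨u, hu, huv⟩ => huv ▸ hu, fun hv => ⟨v, hv, rfl⟩⟩
      _ = (1 + x) ^ Nat.card H.ConnectedComponent := by
        rw [sum_powerset_pow_card, card_univ, Nat.card_eq_fintype_card]


lemma comap_fromEdgeSet_image_sym2Map {W : Type*} (f : W ↪ V) (C : Set (Sym2 W)) :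
    (fromEdgeSet (f.sym2Map '' C)).comap f = fromEdgeSet C := by
  ext a b
  have : s(f a, f b) = f.sym2Map s(a, b) := rfl
  simp only [comap_adj, fromEdgeSet_adj, this, f.sym2Map.injective.mem_set_image,
    f.injective.ne_iff]

lemma induce_fromEdgeSet_union_of_disjoint [DecidableEq V] {U : Finset V}
    {B C : Finset (Sym2 V)} (hB : Disjoint B U.sym2) :
    (fromEdgeSet (↑(B ∪ C) : Set (Sym2 V))).induce (U : Set V)
      = (fromEdgeSet (C : Set (Sym2 V))).induce (U : Set V) := by
  ext a b
  simp only [comap_adj, Function.Embedding.coe_subtype, fromEdgeSet_adj, coe_union,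
    Set.mem_union, mem_coe]
  have : s(a.1, b.1) ∉ B := disjoint_right.1 hB (mk_mem_sym2_iff.2 ⟨a.2, b.2⟩)
  tauto

lemma adjClosed_fromEdgeSet_iff [Fintype V] [DecidableEq V] {S : Finset V}
    {A : Finset (Sym2 V)} (hA : ∀ e ∈ A, ¬ e.IsDiag) :
    (fromEdgeSet (A : Set (Sym2 V))).AdjClosed ↑S ↔ A ⊆ S.sym2 ∪ Sᶜ.sym2 := by
  constructor
  · intro hS e he
    induction e with
    | _ u v =>
      have huv : (fromEdgeSet (A : Set (Sym2 V))).Adj u v := ⟨he, hA _ he⟩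
      by_cases hu : u ∈ S
      · exact mem_union_left _ (mk_mem_sym2_iff.2 ⟨hu, hS huv hu⟩)
      · exact mem_union_right _ (mk_mem_sym2_iff.2 ⟨mem_compl.2 hu,
          mem_compl.2 fun hv => hu (hS huv.symm hv)⟩)
  · rintro hA u v ⟨huv, -⟩ hu
    rcases mem_union.1 (hA huv) with h | h
    · exact (mk_mem_sym2_iff.1 h).2
    · exact absurd hu (mem_compl.1 (mk_mem_sym2_iff.1 h).1)

end SimpleGraph

section

variable {V : Type*} [Fintype V] [DecidableEq V] (G : SimpleGraph V) [DecidableRel G.Adj]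

open SimpleGraph

lemma inducedEdgeCount_eq_card_inter_sym2 (S : Finset V) :
    inducedEdgeCount G S = #(G.edgeFinset ∩ S.sym2) := by
  rw [inducedEdgeCount, filter_mem_eq_inter.symm]
  congr 1
  ext e
  simp [mem_sym2_iff]

lemma rcPartition_induce (U : Finset V) (q w : ℝ) :
    rcPartition (G.induce (U : Set V)) q w
      = ∑ C ∈ (G.edgeFinset ∩ U.sym2).powerset,
          q ^ Nat.card ((fromEdgeSet (C : Set (Sym2 V))).induce (U : Set V)).ConnectedComponent
            * w ^ #C := by
  have hE : (G.induce (U : Set V)).edgeFinset.map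
      (Function.Embedding.subtype (· ∈ (U : Set V))).sym2Map = G.edgeFinset ∩ U.sym2 := by
    convert map_edgeFinset_induce (G := G) (s := (U : Set V)) using 3
    ext; simp
  rw [rcPartition, ← hE, powerset_map, sum_map]
  refine sum_congr rfl fun C _ => ?_
  rw [RelEmbedding.coe_toEmbedding, mapEmbedding_apply, card_map, coe_map, induce,
    comap_fromEdgeSet_image_sym2Map, numComponents]

open Classical in
lemma sum_powerset_adjClosed (S : Finset V) (x w : ℝ) :
    ∑ A ∈ G.edgeFinset.powerset.filter
        (fun A : Finset (Sym2 V) => (fromEdgeSet (↑A : Set (Sym2 V))).AdjClosed ↑S),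
        x ^ Nat.card ((fromEdgeSet (A : Set (Sym2 V))).induce
          (↑(Sᶜ) : Set V)).ConnectedComponent * w ^ #A
      = (1 + w) ^ inducedEdgeCount G S * rcPartition (G.induce (↑(Sᶜ) : Set V)) x w := by
  have hsplit : G.edgeFinset.powerset.filter
      (fun A : Finset (Sym2 V) => (fromEdgeSet (↑A : Set (Sym2 V))).AdjClosed ↑S)
      = (G.edgeFinset ∩ S.sym2 ∪ G.edgeFinset ∩ Sᶜ.sym2).powerset := by
    ext A
    rw [mem_filter, mem_powerset, mem_powerset, ← inter_union_distrib_left, subset_inter_iff]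
    exact and_congr_right fun hA => adjClosed_fromEdgeSet_iff fun e he =>
      G.not_isDiag_of_mem_edgeSet (mem_edgeFinset.1 (hA he))
  have hdisj : Disjoint (G.edgeFinset ∩ S.sym2) (G.edgeFinset ∩ Sᶜ.sym2) :=
    (disjoint_sym2_compl S).mono inter_subset_right inter_subset_right
  rw [hsplit, sum_powerset_union_of_disjoint hdisj, inducedEdgeCount_eq_card_inter_sym2,
    ← sum_powerset_pow_card, rcPartition_induce, sum_mul_sum]
  refine sum_congr rfl fun B hB => sum_congr rfl fun C hC => ?_
  have hB : B ⊆ G.edgeFinset ∩ S.sym2 := mem_powerset.1 hB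
  rw [induce_fromEdgeSet_union_of_disjoint
      ((disjoint_sym2_compl S).mono_left (hB.trans inter_subset_right)),
    card_union_of_disjoint (hdisj.mono hB (mem_powerset.1 hC)), pow_add]
  ring

end

theorem stmt_2 {V : Type*} [Fintype V] [DecidableEq V]
    (G : SimpleGraph V) [DecidableRel G.Adj] (q w : ℝ) :
    rcPartition G q w =
      ∑ S : Finset V, (1 + w) ^ inducedEdgeCount G S *
        rcPartition (SimpleGraph.induce (↑(Sᶜ) : Set V) G) (q - 1) w := by
  classical
  calc rcPartition G q w
      = ∑ A ∈ G.edgeFinset.powerset,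
          ∑ S ∈ univ.filter
              (fun S : Finset V => (SimpleGraph.fromEdgeSet (A : Set (Sym2 V))).AdjClosed ↑S),
            (q - 1) ^ Nat.card ((SimpleGraph.fromEdgeSet (A : Set (Sym2 V))).induce
              (↑(Sᶜ) : Set V)).ConnectedComponent * w ^ #A := by
        refine sum_congr rfl fun A _ => ?_
        rw [← sum_mul, SimpleGraph.sum_adjClosed_pow_card, add_sub_cancel, numComponents]
    _ = ∑ S : Finset V,
          ∑ A ∈ G.edgeFinset.powerset.filter
              (fun A : Finset (Sym2 V) =>
                (SimpleGraph.fromEdgeSet (↑A : Set (Sym2 V))).AdjClosed ↑S),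
            (q - 1) ^ Nat.card ((SimpleGraph.fromEdgeSet (A : Set (Sym2 V))).induce
              (↑(Sᶜ) : Set V)).ConnectedComponent * w ^ #A := by
        refine sum_comm' fun A S => ?_
        simp only [mem_filter, mem_univ, true_and, and_true]
    _ = _ := sum_congr rfl fun S _ => sum_powerset_adjClosed G S (q - 1) w
end

section
/- Let N be a 2×2 real positive definite symmetric matrix with all entries positive. Then there exist vectors a, b ∈ ℝ² with N = a·aᵀ + b·bᵀ such that a₁, a₂, b₁ > 0 and b₂ < 0. -/
/-!
Cholesky factors `!![p, q; q, r]` as `u uᵀ + v vᵀ` with `u = (√p, q/√p)` and `v = (0, D/√p)`,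
`D = √(pr - q²)`. Any rotation `(u, v) ↦ (c u + s v, s u - c v)`, `c² + s² = 1`, keeps the sum of
outer products. Rotating by `(c, s) = (q, D)/√(q² + D²)` would make the second coordinate of the
second vector exactly `0`; the tilt `(c, s) = (2q, D)/√(4q² + D²)` makes it `-qD/√(p(4q² + D²)) < 0`
while every other coordinate stays positive.
-/

open Matrix

theorem Matrix.vecMulVec_add_vecMulVec_rotate {R n : Type*} [CommRing R] {c s : R}
    (hcs : c ^ 2 + s ^ 2 = 1) (u v : n → R) :
    vecMulVec (c • u + s • v) (c • u + s • v) + vecMulVec (s • u - c • v) (s • u - c • v) =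
      vecMulVec u u + vecMulVec v v := by
  ext i j
  simp only [add_apply, vecMulVec_apply, Pi.add_apply, Pi.sub_apply, Pi.smul_apply, smul_eq_mul]
  linear_combination (u i * u j + v i * v j) * hcs

theorem Matrix.fin_two_eq_vecMulVec_add_vecMulVec {p q r : ℝ} (hp : 0 < p) (hdet : q ^ 2 ≤ p * r) :
    !![p, q; q, r] =
      vecMulVec ![√p, q / √p] ![√p, q / √p] +
        vecMulVec ![0, √(p * r - q ^ 2) / √p] ![0, √(p * r - q ^ 2) / √p] := by
  have hsp : √p ≠ 0 := (Real.sqrt_pos.mpr hp).ne'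
  have hp2 := Real.sq_sqrt hp.le
  have hD2 := Real.sq_sqrt (sub_nonneg.mpr hdet)
  ext i j
  fin_cases i <;> fin_cases j <;>
    simp only [add_apply, vecMulVec_apply, of_apply, cons_val', cons_val_zero, cons_val_one,
      cons_val_fin_one, Fin.isValue, Fin.zero_eta, Fin.mk_one, mul_zero, zero_mul, add_zero]
  · rw [← sq, hp2]
  · field_simp
  · field_simp
  · field_simp
    rw [mul_comm r p]
    linear_combination r * hp2 - hD2

theorem exists_vecMulVec_add_vecMulVec_of_fin_two {p q r : ℝ} (hp : 0 < p) (hq : 0 < q)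
    (hdet : q ^ 2 < p * r) :
    ∃ a b : Fin 2 → ℝ, !![p, q; q, r] = vecMulVec a a + vecMulVec b b ∧
      0 < a 0 ∧ 0 < a 1 ∧ 0 < b 0 ∧ b 1 < 0 := by
  set D := √(p * r - q ^ 2)
  have hD : 0 < D := Real.sqrt_pos.mpr (sub_pos.mpr hdet)
  have hsp : 0 < √p := Real.sqrt_pos.mpr hp
  set ρ := √((2 * q) ^ 2 + D ^ 2)
  have hρ : 0 < ρ := Real.sqrt_pos.mpr (by positivity)
  have hρ2 : ρ ^ 2 = (2 * q) ^ 2 + D ^ 2 := Real.sq_sqrt (by positivity)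
  have hcs : (2 * q / ρ) ^ 2 + (D / ρ) ^ 2 = 1 := by
    rw [div_pow, div_pow, ← add_div, hρ2, div_self (by positivity)]
  refine ⟨(2 * q / ρ) • ![√p, q / √p] + (D / ρ) • ![0, D / √p],
    (D / ρ) • ![√p, q / √p] - (2 * q / ρ) • ![0, D / √p], ?_, ?_, ?_, ?_, ?_⟩
  · rw [vecMulVec_add_vecMulVec_rotate hcs]
    exact fin_two_eq_vecMulVec_add_vecMulVec hp hdet.le
  all_goals simp only [Pi.add_apply, Pi.sub_apply, Pi.smul_apply, smul_eq_mul, cons_val_zero,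
    cons_val_one, cons_val_fin_one, mul_zero, add_zero, sub_zero]
  · positivity
  · positivity
  · positivity
  · have : D / ρ * (q / √p) - 2 * q / ρ * (D / √p) = -(q * D / (ρ * √p)) := by
      field_simp; ring
    rw [this, neg_neg_iff_pos]
    positivity

theorem stmt_5_general (N : Matrix (Fin 2) (Fin 2) ℝ) (hpd : N.PosDef)
    (hpos : ∀ i j, 0 < N i j) :
    ∃ a b : Fin 2 → ℝ, N = Matrix.vecMulVec a a + Matrix.vecMulVec b b ∧
      0 < a 0 ∧ 0 < a 1 ∧ 0 < b 0 ∧ b 1 < 0 := by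
  have hsymm : N 1 0 = N 0 1 := by simpa using congrFun₂ hpd.isHermitian.eq 0 1
  have hdet := hpd.det_pos
  rw [det_fin_two, hsymm] at hdet
  rw [eta_fin_two N, hsymm]
  exact exists_vecMulVec_add_vecMulVec_of_fin_two (hpos 0 0) (hpos 0 1) (by linarith)

theorem stmt_5 (N : Matrix (Fin 2) (Fin 2) ℝ) (hsymm : N.IsSymm) (hpd : N.PosDef)
    (hpos : ∀ i j, 0 < N i j) :
    ∃ a b : Fin 2 → ℝ, N = Matrix.vecMulVec a a + Matrix.vecMulVec b b ∧
      0 < a 0 ∧ 0 < a 1 ∧ 0 < b 0 ∧ b 1 < 0 :=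
  stmt_5_general N hpd hpos
end

section
/- Let N be a 2×2 real positive definite symmetric matrix with all entries positive. Then there exist vectors a', b' ∈ ℝ² with N = a'·a'ᵀ + b'·b'ᵀ such that all four numbers a'₁, a'₂, b'₁, b'₂ are positive. -/
/-!
If `N = [[p, q], [q, r]]` with `q² ≤ p r`, write `(a 0, b 0) = √p (cos φ, sin φ)` and
`(a 1, b 1) = √r (cos ψ, sin ψ)`; the three entries of `N` are matched exactly when
`cos (φ - ψ) = q / √(p r)`. Since this lies in `(0, 1]`, its arccos `δ` lies in `[0, π/2)`, and
`φ, ψ = π/4 ± δ/2` then both lie in `(0, π/2)`, which makes all four coordinates positive.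
-/

open Real Set

lemma exists_mem_Ioo_cos_sub_eq {κ : ℝ} (hκ₀ : 0 < κ) (hκ₁ : κ ≤ 1) :
    ∃ φ ∈ Ioo 0 (π / 2), ∃ ψ ∈ Ioo 0 (π / 2), cos (φ - ψ) = κ := by
  set δ := arccos κ
  have hδ₀ : 0 ≤ δ := arccos_nonneg κ
  have hδ₁ : δ < π / 2 := arccos_lt_pi_div_two.mpr hκ₀
  refine ⟨π / 4 + δ / 2, ⟨by positivity, by linarith⟩, π / 4 - δ / 2,
    ⟨by linarith [pi_pos], by linarith⟩, ?_⟩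
  rw [show π / 4 + δ / 2 - (π / 4 - δ / 2) = δ by ring]
  exact cos_arccos (by linarith) hκ₁

lemma exists_pos_sq_add_sq_eq {p q r : ℝ} (hp : 0 ≤ p) (hq : 0 < q) (hqpr : q ^ 2 ≤ p * r) :
    ∃ a₀ a₁ b₀ b₁ : ℝ, 0 < a₀ ∧ 0 < a₁ ∧ 0 < b₀ ∧ 0 < b₁ ∧
      a₀ ^ 2 + b₀ ^ 2 = p ∧ a₀ * a₁ + b₀ * b₁ = q ∧ a₁ ^ 2 + b₁ ^ 2 = r := by
  have hpr_pos : 0 < p * r := (pow_pos hq 2).trans_le hqpr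
  have hp_pos : 0 < p := hp.lt_of_ne (by rintro rfl; simp at hpr_pos)
  have hr_pos : 0 < r := pos_of_mul_pos_right hpr_pos hp
  have hpr : √p * √r = √(p * r) := (sqrt_mul hp r).symm
  have hq_le : q ≤ √(p * r) := le_sqrt_of_sq_le hqpr
  obtain ⟨φ, hφ, ψ, hψ, hcos⟩ :=
    exists_mem_Ioo_cos_sub_eq (κ := q / √(p * r)) (by positivity)
      ((div_le_one (by positivity)).mpr hq_le)
  have hcos_pos {θ : ℝ} (hθ : θ ∈ Ioo 0 (π / 2)) : 0 < cos θ :=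
    cos_pos_of_mem_Ioo ⟨by linarith [hθ.1, pi_pos], hθ.2⟩
  have hsin_pos {θ : ℝ} (hθ : θ ∈ Ioo 0 (π / 2)) : 0 < sin θ :=
    sin_pos_of_pos_of_lt_pi hθ.1 (by linarith [hθ.2, pi_pos])
  refine ⟨√p * cos φ, √r * cos ψ, √p * sin φ, √r * sin ψ,
    mul_pos (sqrt_pos.mpr hp_pos) (hcos_pos hφ), mul_pos (sqrt_pos.mpr hr_pos) (hcos_pos hψ),
    mul_pos (sqrt_pos.mpr hp_pos) (hsin_pos hφ), mul_pos (sqrt_pos.mpr hr_pos) (hsin_pos hψ),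
    ?_, ?_, ?_⟩
  · rw [mul_pow, mul_pow, ← mul_add, cos_sq_add_sin_sq, sq_sqrt hp, mul_one]
  · rw [cos_sub, eq_div_iff (sqrt_pos.mpr hpr_pos).ne', ← hpr] at hcos
    linear_combination hcos
  · rw [mul_pow, mul_pow, ← mul_add, cos_sq_add_sin_sq, sq_sqrt hr_pos.le, mul_one]

theorem Matrix.PosSemidef.exists_eq_vecMulVec_add_vecMulVec_of_pos
    {N : Matrix (Fin 2) (Fin 2) ℝ} (hN : N.PosSemidef) (h01 : 0 < N 0 1) :
    ∃ a b : Fin 2 → ℝ, N = vecMulVec a a + vecMulVec b b ∧ (∀ i, 0 < a i) ∧ ∀ i, 0 < b i := by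
  have hsymm : N 1 0 = N 0 1 := by simpa using hN.isHermitian.apply 0 1
  have hdet : N 0 1 ^ 2 ≤ N 0 0 * N 1 1 := by
    have := hN.det_nonneg
    rw [det_fin_two, hsymm] at this
    linarith
  obtain ⟨a₀, a₁, b₀, b₁, ha₀, ha₁, hb₀, hb₁, hp, hq, hr⟩ :=
    exists_pos_sq_add_sq_eq hN.diag_nonneg h01 hdet
  refine ⟨![a₀, a₁], ![b₀, b₁], ?_, Fin.forall_fin_two.mpr ⟨ha₀, ha₁⟩,
    Fin.forall_fin_two.mpr ⟨hb₀, hb₁⟩⟩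
  ext i j
  fin_cases i <;> fin_cases j <;> simp [hsymm, ← hp, ← hq, ← hr] <;> ring

theorem stmt_6_general (N : Matrix (Fin 2) (Fin 2) ℝ) (hpd : N.PosDef)
    (hpos : ∀ i j, 0 < N i j) :
    ∃ a b : Fin 2 → ℝ, N = Matrix.vecMulVec a a + Matrix.vecMulVec b b ∧
      0 < a 0 ∧ 0 < a 1 ∧ 0 < b 0 ∧ 0 < b 1 := by
  obtain ⟨a, b, hN, ha, hb⟩ :=
    hpd.posSemidef.exists_eq_vecMulVec_add_vecMulVec_of_pos (hpos 0 1)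
  exact ⟨a, b, hN, ha 0, ha 1, hb 0, hb 1⟩

theorem stmt_6 (N : Matrix (Fin 2) (Fin 2) ℝ) (hsymm : N.IsSymm) (hpd : N.PosDef)
    (hpos : ∀ i j, 0 < N i j) :
    ∃ a b : Fin 2 → ℝ, N = Matrix.vecMulVec a a + Matrix.vecMulVec b b ∧
      0 < a 0 ∧ 0 < a 1 ∧ 0 < b 0 ∧ 0 < b 1 :=
  stmt_6_general N hpd hpos
end

section
/- Let d ≥ 1 and let a₁, a₂, b₁, b₂, μ₁, μ₂ ∈ ℝ with a₁, a₂, b₁, μ₁, μ₂ > 0, b₂ < 0 and a₁a₂ + b₁b₂ > 0. Then there is a unique t₁ ∈ [0, π/2] with arctan(b₁/a₁) < t₁ < arctan(a₂/(−b₂)) such that (a₁(t₁)b₁(t₁))/(a₂(t₁)b₂(t₁)) = (μ₂/μ₁)^{2/d}, where a_i(t) = a_i cos t + b_i sin t and b_i(t) = b_i cos t − a_i sin t. Moreover for this t₁ one has a₁(t₁), a₂(t₁) > 0 and b₁(t₁), b₂(t₁) < 0. -/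
open Real

private lemma cross_sin (s u v : ℝ) :
    Real.sin v * Real.sin (s - u) - Real.sin u * Real.sin (s - v)
      = Real.sin s * Real.sin (v - u) := by
  rw [Real.sin_sub, Real.sin_sub, Real.sin_sub]; ring

set_option maxHeartbeats 1000000 in
theorem stmt_11 (d : ℕ) (hd : 1 ≤ d) (a₁ a₂ b₁ b₂ μ₁ μ₂ : ℝ)
    (ha₁ : 0 < a₁) (ha₂ : 0 < a₂) (hb₁ : 0 < b₁) (hμ₁ : 0 < μ₁) (hμ₂ : 0 < μ₂)
    (hb₂ : b₂ < 0) (hab : 0 < a₁ * a₂ + b₁ * b₂) :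
    (∃! t₁ : ℝ, t₁ ∈ Set.Icc 0 (π / 2) ∧
        arctan (b₁ / a₁) < t₁ ∧ t₁ < arctan (a₂ / (-b₂)) ∧
        ((a₁ * cos t₁ + b₁ * sin t₁) * (b₁ * cos t₁ - a₁ * sin t₁)) /
            ((a₂ * cos t₁ + b₂ * sin t₁) * (b₂ * cos t₁ - a₂ * sin t₁)) =
          (μ₂ / μ₁) ^ ((2 : ℝ) / d)) ∧
    (∀ t₁ : ℝ, t₁ ∈ Set.Icc 0 (π / 2) →
        arctan (b₁ / a₁) < t₁ → t₁ < arctan (a₂ / (-b₂)) →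
        ((a₁ * cos t₁ + b₁ * sin t₁) * (b₁ * cos t₁ - a₁ * sin t₁)) /
            ((a₂ * cos t₁ + b₂ * sin t₁) * (b₂ * cos t₁ - a₂ * sin t₁)) =
          (μ₂ / μ₁) ^ ((2 : ℝ) / d) →
        0 < a₁ * cos t₁ + b₁ * sin t₁ ∧ 0 < a₂ * cos t₁ + b₂ * sin t₁ ∧
          b₁ * cos t₁ - a₁ * sin t₁ < 0 ∧ b₂ * cos t₁ - a₂ * sin t₁ < 0) := by
  have hb₂' : 0 < -b₂ := neg_pos.2 hb₂
  have hC : (0:ℝ) < (μ₂ / μ₁) ^ ((2 : ℝ) / d) :=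
    rpow_pos_of_pos (div_pos hμ₂ hμ₁) _
  set C := (μ₂ / μ₁) ^ ((2 : ℝ) / d) with hCdef
  set α := arctan (b₁ / a₁) with hαdef
  set β := arctan (a₂ / (-b₂)) with hβdef
  have hα0 : 0 < α := by
    rw [hαdef, ← Real.arctan_zero]
    exact arctan_strictMono (div_pos hb₁ ha₁)
  have hαlt : α < π / 2 := arctan_lt_pi_div_two _
  have hβ0 : 0 < β := by
    rw [hβdef, ← Real.arctan_zero]
    exact arctan_strictMono (div_pos ha₂ hb₂')
  have hβlt : β < π / 2 := arctan_lt_pi_div_two _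
  have hαβ : α < β := by
    apply arctan_strictMono
    rw [div_lt_div_iff₀ ha₁ hb₂']
    nlinarith
  have hpi : (0:ℝ) < π := pi_pos
  -- cosine/sine of α and β
  have hcα : 0 < cos α := cos_arctan_pos _
  have hsβ : 0 < sin β := sin_pos_of_pos_of_lt_pi hβ0 (by linarith)
  have hcβ : 0 < cos β := cos_arctan_pos _
  have key1 : a₁ * sin α = b₁ * cos α := by
    have h := Real.tan_arctan (b₁ / a₁)
    rw [← hαdef, tan_eq_sin_div_cos, div_eq_div_iff hcα.ne' ha₁.ne'] at h
    linarith
  have key2 : (-b₂) * sin β = a₂ * cos β := by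
    have h := Real.tan_arctan (a₂ / (-b₂))
    rw [← hβdef, tan_eq_sin_div_cos, div_eq_div_iff hcβ.ne' hb₂'.ne'] at h
    linarith
  set r₁ := a₁ / cos α with hr₁def
  set r₂ := a₂ / sin β with hr₂def
  have hr₁ : 0 < r₁ := div_pos ha₁ hcα
  have hr₂ : 0 < r₂ := div_pos ha₂ hsβ
  have ha₁' : a₁ = r₁ * cos α := by rw [hr₁def]; field_simp
  have hb₁' : b₁ = r₁ * sin α := by
    rw [hr₁def]; rw [div_mul_eq_mul_div, eq_div_iff hcα.ne']; linarith
  have ha₂' : a₂ = r₂ * sin β := by rw [hr₂def]; field_simp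
  have hb₂'' : b₂ = -(r₂ * cos β) := by
    rw [hr₂def]; rw [div_mul_eq_mul_div, ← neg_div, eq_div_iff hsβ.ne']; linarith
  have e1 : ∀ t : ℝ, a₁ * cos t + b₁ * sin t = r₁ * cos (t - α) := by
    intro t; rw [cos_sub]; linear_combination cos t * ha₁' + sin t * hb₁'
  have e1' : ∀ t : ℝ, b₁ * cos t - a₁ * sin t = -(r₁ * sin (t - α)) := by
    intro t; rw [sin_sub]; linear_combination cos t * hb₁' - sin t * ha₁'
  have e2 : ∀ t : ℝ, a₂ * cos t + b₂ * sin t = r₂ * sin (β - t) := by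
    intro t; rw [sin_sub]; linear_combination cos t * ha₂' + sin t * hb₂''
  have e2' : ∀ t : ℝ, b₂ * cos t - a₂ * sin t = -(r₂ * cos (β - t)) := by
    intro t; rw [cos_sub]; linear_combination cos t * hb₂'' - sin t * ha₂'
  -- general fact: equation ↔ P = C * Q on (α, β)
  have hsin_pos : ∀ y : ℝ, α < y → y < β → 0 < sin (β - y) :=
    fun y h1 h2 => sin_pos_of_pos_of_lt_pi (by linarith) (by linarith)
  have hcos_pos : ∀ y : ℝ, α < y → y < β → 0 < cos (β - y) := by
    intro y h1 h2
    exact cos_pos_of_mem_Ioo ⟨by linarith, by linarith⟩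
  have eq_iff : ∀ y : ℝ, α < y → y < β →
      (((a₁ * cos y + b₁ * sin y) * (b₁ * cos y - a₁ * sin y)) /
            ((a₂ * cos y + b₂ * sin y) * (b₂ * cos y - a₂ * sin y)) = C ↔
        r₁^2 * (cos (y - α) * sin (y - α)) -
          C * (r₂^2 * (sin (β - y) * cos (β - y))) = 0) := by
    intro y h1 h2
    have hs := hsin_pos y h1 h2
    have hc := hcos_pos y h1 h2
    have hD : (a₂ * cos y + b₂ * sin y) * (b₂ * cos y - a₂ * sin y) ≠ 0 := by
      rw [e2 y, e2' y]
      have : 0 < (r₂ * sin (β - y)) * (r₂ * cos (β - y)) := by positivity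
      intro h; rw [mul_neg] at h; nlinarith
    rw [div_eq_iff hD, e1 y, e1' y, e2 y, e2' y]
    constructor
    · intro h; linear_combination -h
    · intro h; linear_combination -h
  -- existence via IVT
  have hcont : ContinuousOn (fun t : ℝ => r₁^2 * (cos (t - α) * sin (t - α)) -
      C * (r₂^2 * (sin (β - t) * cos (β - t)))) (Set.Icc α β) := by
    fun_prop
  have hsαβ : 0 < sin (β - α) := sin_pos_of_pos_of_lt_pi (by linarith) (by linarith)
  have hcαβ : 0 < cos (β - α) := cos_pos_of_mem_Ioo ⟨by linarith, by linarith⟩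
  have hgα : r₁^2 * (cos (α - α) * sin (α - α)) -
      C * (r₂^2 * (sin (β - α) * cos (β - α))) < 0 := by
    rw [sub_self, sin_zero]
    have : 0 < C * (r₂^2 * (sin (β - α) * cos (β - α))) := by positivity
    nlinarith
  have hgβ : 0 < r₁^2 * (cos (β - α) * sin (β - α)) -
      C * (r₂^2 * (sin (β - β) * cos (β - β))) := by
    rw [sub_self, sin_zero]
    have : 0 < r₁^2 * (cos (β - α) * sin (β - α)) := by positivity
    nlinarith
  obtain ⟨t, htmem, hgt⟩ := intermediate_value_Icc hαβ.le hcont ⟨hgα.le, hgβ.le⟩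
  simp only at hgt
  have htα : α < t := by
    rcases lt_or_eq_of_le htmem.1 with h | h
    · exact h
    · exfalso; rw [← h] at hgt; linarith
  have htβ : t < β := by
    rcases lt_or_eq_of_le htmem.2 with h | h
    · exact h
    · exfalso; rw [h] at hgt; linarith
  -- uniqueness helper: any two roots in (α, β) coincide
  have uniq : ∀ y z : ℝ, α < y → y < β → α < z → z < β →
      r₁^2 * (cos (y - α) * sin (y - α)) - C * (r₂^2 * (sin (β - y) * cos (β - y))) = 0 →
      r₁^2 * (cos (z - α) * sin (z - α)) - C * (r₂^2 * (sin (β - z) * cos (β - z))) = 0 →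
      y = z := by
    intro y z hy1 hy2 hz1 hz2 hgy hgz
    have hrr : (r₁^2 * r₂^2 : ℝ) ≠ 0 := by positivity
    have hPQ : (r₁^2 * r₂^2) * (cos (y - α) * sin (y - α) * (sin (β - z) * cos (β - z)))
        = (r₁^2 * r₂^2) * (cos (z - α) * sin (z - α) * (sin (β - y) * cos (β - y))) := by
      have h1 : r₁^2 * (cos (y - α) * sin (y - α))
          = C * (r₂^2 * (sin (β - y) * cos (β - y))) := by linarith
      have h2 : r₁^2 * (cos (z - α) * sin (z - α))
          = C * (r₂^2 * (sin (β - z) * cos (β - z))) := by linarith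
      linear_combination (r₂^2 * (sin (β - z) * cos (β - z))) * h1 -
        (r₂^2 * (sin (β - y) * cos (β - y))) * h2
    have hPQ' : cos (y - α) * sin (y - α) * (sin (β - z) * cos (β - z))
        = cos (z - α) * sin (z - α) * (sin (β - y) * cos (β - y)) :=
      mul_left_cancel₀ hrr hPQ
    have huv : sin (2*(z - α)) * sin (2*(β - y)) - sin (2*(y - α)) * sin (2*(β - z)) = 0 := by
      rw [sin_two_mul, sin_two_mul, sin_two_mul, sin_two_mul]
      linear_combination -4 * hPQ'
    have hcr := cross_sin (2*(β - α)) (2*(y - α)) (2*(z - α))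
    have es1 : 2*(β - α) - 2*(y - α) = 2*(β - y) := by ring
    have es2 : 2*(β - α) - 2*(z - α) = 2*(β - z) := by ring
    have es3 : 2*(z - α) - 2*(y - α) = 2*(z - y) := by ring
    rw [es1, es2, es3] at hcr
    have hzero : sin (2*(β - α)) * sin (2*(z - y)) = 0 := by linarith
    have hs2 : 0 < sin (2*(β - α)) :=
      sin_pos_of_pos_of_lt_pi (by linarith) (by linarith)
    have : sin (2*(z - y)) = 0 := by
      rcases mul_eq_zero.1 hzero with h | h
      · exact absurd h hs2.ne'
      · exact h
    have h3 : 2*(z - y) = 0 := by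
      rw [← Real.sin_eq_zero_iff_of_lt_of_lt (by linarith) (by linarith)]
      exact this
    linarith
  -- signs
  have signs : ∀ y : ℝ, y ∈ Set.Icc 0 (π / 2) → α < y → y < β →
      0 < a₁ * cos y + b₁ * sin y ∧ 0 < a₂ * cos y + b₂ * sin y ∧
        b₁ * cos y - a₁ * sin y < 0 ∧ b₂ * cos y - a₂ * sin y < 0 := by
    intro y hy h1 h2
    have hy0 : 0 ≤ y := hy.1
    have hylt : y < π / 2 := lt_of_lt_of_le h2 hβlt.le
    have hcy : 0 < cos y := cos_pos_of_mem_Ioo ⟨by linarith, hylt⟩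
    have hsy : 0 ≤ sin y := sin_nonneg_of_nonneg_of_le_pi hy0 (by linarith)
    refine ⟨?_, ?_, ?_, ?_⟩
    · have h1 := mul_pos ha₁ hcy
      have h2 := mul_nonneg hb₁.le hsy
      linarith
    · have htt : tan y < tan β :=
        tan_lt_tan_of_lt_of_lt_pi_div_two (by linarith) hβlt h2
      rw [hβdef, Real.tan_arctan, tan_eq_sin_div_cos,
        div_lt_div_iff₀ hcy hb₂'] at htt
      nlinarith [htt]
    · have htt : tan α < tan y :=
        tan_lt_tan_of_lt_of_lt_pi_div_two (by linarith [neg_pi_div_two_lt_arctan (b₁/a₁)]) hylt h1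
      rw [hαdef, Real.tan_arctan, tan_eq_sin_div_cos,
        div_lt_div_iff₀ ha₁ hcy] at htt
      nlinarith [htt]
    · have h1 := mul_neg_of_neg_of_pos hb₂ hcy
      have h2 := mul_nonneg ha₂.le hsy
      linarith
  have htIcc : t ∈ Set.Icc 0 (π / 2) := ⟨by linarith, by linarith⟩
  refine ⟨⟨t, ⟨htIcc, htα, htβ, (eq_iff t htα htβ).2 hgt⟩, ?_⟩, fun y hy h1 h2 _ => signs y hy h1 h2⟩
  rintro y ⟨hyIcc, hy1, hy2, hyeq⟩
  exact uniq y t hy1 hy2 htα htβ ((eq_iff y hy1 hy2).1 hyeq) hgt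
end

section
/- Let Q be a 2×2 real matrix with positive entries and positive determinant, and let k ≥ 1 be an integer. Then the equation R = ((Q₁₁ R + Q₁₂)/(Q₂₁ R + Q₂₂))^k has at most 3 nonnegative real solutions R. -/
/-!
Writing a solution as `R = t ^ k` with `t = (Q₀₀ R + Q₀₁) / (Q₁₀ R + Q₁₁) > 0` and clearing the
denominator, `t` is a positive root of `Q₁₀ X ^ (k + 1) - Q₀₀ X ^ k + Q₁₁ X - Q₀₁`, and `R ↦ t` is
injective. This polynomial has at most four monomials, hence at most three sign changes, so by
Descartes' rule of signs at most three positive roots.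
-/

open Polynomial

namespace Polynomial

theorem signVariations_le_card_support_sub_one {R : Type*} [Semiring R] [LinearOrder R]
    (P : R[X]) : P.signVariations ≤ P.support.card - 1 := by
  induction hn : P.support.card generalizing P with
  | zero => simp_all
  | succ n ih =>
    have hP : P ≠ 0 := by rintro rfl; simp at hn
    by_cases hE : P.eraseLead = 0
    · rw [← eraseLead_add_monomial_natDegree_leadingCoeff P, hE, zero_add,
        signVariations_monomial]
      exact Nat.zero_le _
    · have hcard : P.eraseLead.support.card = n := by
        have := card_support_eraseLead_add_one hP
        omega
      have hn0 : n ≠ 0 := by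
        rintro rfl
        exact hE (support_eq_empty.mp (Finset.card_eq_zero.mp hcard))
      have := ih _ hcard
      have := signVariations_le_eraseLead_succ P
      omega

theorem card_le_card_support_sub_one_of_pos_isRoot {R : Type*} [CommRing R] [LinearOrder R]
    [IsStrictOrderedRing R] {P : R[X]} (hP : P ≠ 0) {s : Finset R}
    (hs : ∀ x ∈ s, 0 < x ∧ P.IsRoot x) : s.card ≤ P.support.card - 1 := by
  classical
  calc s.card ≤ (P.roots.filter (0 < ·)).toFinset.card := by
        refine Finset.card_le_card fun x hx => ?_
        simpa [hP, and_comm] using hs x hx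
    _ ≤ P.roots.countP (0 < ·) := by
        rw [Multiset.countP_eq_card_filter]
        exact Multiset.toFinset_card_le _
    _ ≤ P.signVariations := roots_countP_pos_le_signVariations P
    _ ≤ P.support.card - 1 := signVariations_le_card_support_sub_one P

end Polynomial

noncomputable def fixedPointPoly (Q : Matrix (Fin 2) (Fin 2) ℝ) (k : ℕ) : ℝ[X] :=
  C (Q 1 0) * X ^ (k + 1) - C (Q 0 0) * X ^ k + C (Q 1 1) * X - C (Q 0 1)

section FixedPointPoly

variable (Q : Matrix (Fin 2) (Fin 2) ℝ) (k : ℕ)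

theorem card_support_fixedPointPoly_le : (fixedPointPoly Q k).support.card ≤ 4 := by
  calc _ ≤ ({k + 1, k, 1, 0} : Finset ℕ).card := by
        refine Finset.card_le_card fun n hn => ?_
        contrapose! hn
        simp only [Finset.mem_insert, Finset.mem_singleton, not_or] at hn
        simp [fixedPointPoly, coeff_X_pow, coeff_X, coeff_C, hn.1, hn.2.1, Ne.symm hn.2.2.1,
          hn.2.2.2]
    _ ≤ 4 := Finset.card_le_four

theorem fixedPointPoly_ne_zero (h00 : 0 ≤ Q 0 0) (h01 : 0 < Q 0 1) :
    fixedPointPoly Q k ≠ 0 := by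
  intro h
  have heval : (fixedPointPoly Q k).eval 0 = 0 := by rw [h, eval_zero]
  have h0k : (0 : ℝ) ≤ 0 ^ k := pow_nonneg le_rfl k
  simp [fixedPointPoly] at heval
  nlinarith

theorem isRoot_fixedPointPoly {t : ℝ}
    (ht : t * (Q 1 0 * t ^ k + Q 1 1) = Q 0 0 * t ^ k + Q 0 1) :
    (fixedPointPoly Q k).IsRoot t := by
  simp only [fixedPointPoly, IsRoot, eval_sub, eval_add, eval_mul, eval_C, eval_pow, eval_X]
  linear_combination ht

end FixedPointPoly

theorem stmt_12_general (Q : Matrix (Fin 2) (Fin 2) ℝ) (hpos : ∀ i j, 0 < Q i j)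
    (k : ℕ) (s : Finset ℝ)
    (hs : ∀ R ∈ s, 0 ≤ R ∧ R = ((Q 0 0 * R + Q 0 1) / (Q 1 0 * R + Q 1 1)) ^ k) :
    s.card ≤ 3 := by
  classical
  set t : ℝ → ℝ := fun R => (Q 0 0 * R + Q 0 1) / (Q 1 0 * R + Q 1 1)
  have ht_pow : ∀ R ∈ s, t R ^ k = R := fun R hR => (hs R hR).2.symm
  have hden : ∀ R ∈ s, 0 < Q 1 0 * R + Q 1 1 := fun R hR =>
    add_pos_of_nonneg_of_pos (mul_nonneg (hpos 1 0).le (hs R hR).1) (hpos 1 1)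
  have ht_root : ∀ R ∈ s, 0 < t R ∧ (fixedPointPoly Q k).IsRoot (t R) := fun R hR =>
    ⟨div_pos (add_pos_of_nonneg_of_pos (mul_nonneg (hpos 0 0).le (hs R hR).1) (hpos 0 1))
        (hden R hR),
      isRoot_fixedPointPoly Q k <| by
        rw [ht_pow R hR]
        exact div_mul_cancel₀ _ (hden R hR).ne'⟩
  calc s.card = (s.image t).card :=
        (Finset.card_image_of_injOn (Set.LeftInvOn.injOn (f₁' := (· ^ k)) ht_pow)).symm
    _ ≤ (fixedPointPoly Q k).support.card - 1 :=
        card_le_card_support_sub_one_of_pos_isRoot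
          (fixedPointPoly_ne_zero Q k (hpos 0 0).le (hpos 0 1))
          (by simpa using ht_root)
    _ ≤ 3 := by
        have := card_support_fixedPointPoly_le Q k
        omega

theorem stmt_12 (Q : Matrix (Fin 2) (Fin 2) ℝ) (hpos : ∀ i j, 0 < Q i j)
    (hdet : 0 < Q.det) (k : ℕ) (hk : 1 ≤ k) (s : Finset ℝ)
    (hs : ∀ R ∈ s, 0 ≤ R ∧ R = ((Q 0 0 * R + Q 0 1) / (Q 1 0 * R + Q 1 1)) ^ k) :
    s.card ≤ 3 :=
  stmt_12_general Q hpos k s hs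
end

section
/- Let μ₁, μ₂ > 0 and a₁, a₂, b₁, b₂ > 0, and let t₀ ∈ [0, π/2] be a maximizer of Φ(t) = μ₁a₁(t)^d + μ₂a₂(t)^d over [0, π/2], where a_i(t) = a_i cos t + b_i sin t. Set r_j(t) = μ₁ a₁(t)^{d−j} b₁(t)^j + μ₂ a₂(t)^{d−j} b₂(t)^j with b_i(t) = b_i cos t − a_i sin t. Then r₁(t₀) = 0, and either r_j(t₀) ≥ 0 for all j = 0,...,d, or r_j(t₀) ≥ 0 for all even j and r_j(t₀) ≤ 0 for all odd j. -/
/-!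
At a maximiser `t₀` of `Φ` one has `Φ'(t₀) = d · r₁(t₀)`; since `Φ'(0) > 0 > Φ'(π/2)`, the
maximiser is interior, so `r₁(t₀) = 0`. With `Aᵢ = aᵢ(t₀) > 0`, `Bᵢ = bᵢ(t₀)`, `x = B₁/A₁`,
`y = B₂/A₂` and `wᵢ = μᵢ Aᵢ^d` we get `r_j(t₀) = w₁ x^j + w₂ y^j` and `w₁ x + w₂ y = 0`. Hence
`r_{k+1}(t₀) = w₁ x (x^k - y^k)`: `x` and `y` have opposite signs, and the sign pattern of the
`r_j(t₀)` is decided by which of `|x|`, `|y|` is larger.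
-/

open Real Set

lemma mul_cos_add_mul_sin_pos {a b t : ℝ} (ha : 0 < a) (hb : 0 < b) (ht : t ∈ Icc 0 (π / 2)) :
    0 < a * cos t + b * sin t := by
  have hcos : 0 ≤ cos t := cos_nonneg_of_mem_Icc ⟨by linarith [pi_pos, ht.1], ht.2⟩
  have hsin : 0 ≤ sin t := sin_nonneg_of_nonneg_of_le_pi ht.1 (by linarith [pi_pos, ht.2])
  by_contra! h
  have hc : cos t = 0 := by nlinarith [mul_nonneg hb.le hsin]
  have hs : sin t = 0 := by nlinarith [mul_nonneg ha.le hcos]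
  simpa [hc, hs] using sin_sq_add_cos_sq t

lemma hasDerivAt_mul_cos_add_mul_sin_pow (μ a b : ℝ) (d : ℕ) (t : ℝ) :
    HasDerivAt (fun t => μ * (a * cos t + b * sin t) ^ d)
      (d * (μ * (a * cos t + b * sin t) ^ (d - 1) * (b * cos t - a * sin t))) t := by
  have h := ((hasDerivAt_cos t).const_mul a).fun_add ((hasDerivAt_sin t).const_mul b)
  exact ((h.pow d).const_mul μ).congr_deriv (by ring)

theorem IsMaxOn.hasDerivAt_nonpos_of_left {f : ℝ → ℝ} {f' a b : ℝ} (hab : a < b)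
    (h : IsMaxOn f (Icc a b) a) (hf : HasDerivAt f f' a) : f' ≤ 0 := by
  have := h.localize.hasFDerivWithinAt_nonpos hf.hasDerivWithinAt
    (sub_mem_posTangentConeAt_of_segment_subset (segment_subset_Icc hab.le))
  simp only [ContinuousLinearMap.toSpanSingleton_apply, smul_eq_mul] at this
  nlinarith

theorem IsMaxOn.hasDerivAt_nonneg_of_right {f : ℝ → ℝ} {f' a b : ℝ} (hab : a < b)
    (h : IsMaxOn f (Icc a b) b) (hf : HasDerivAt f f' b) : 0 ≤ f' := by
  have := h.localize.hasFDerivWithinAt_nonpos hf.hasDerivWithinAt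
    (sub_mem_posTangentConeAt_of_segment_subset (segment_symm ℝ a b ▸ segment_subset_Icc hab.le))
  simp only [ContinuousLinearMap.toSpanSingleton_apply, smul_eq_mul] at this
  nlinarith

theorem IsMaxOn.eq_zero_of_hasDerivAt_of_pos_of_neg {f f' : ℝ → ℝ} {a b c : ℝ}
    (h : IsMaxOn f (Icc a b) c) (hc : c ∈ Icc a b) (hf : ∀ x ∈ Icc a b, HasDerivAt f (f' x) x)
    (ha : 0 < f' a) (hb : f' b < 0) : f' c = 0 := by
  have hab : a < b := hc.1.trans hc.2 |>.lt_of_ne fun hab => by subst hab; linarith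
  rcases hc.1.eq_or_lt with rfl | hac
  · exact absurd (h.hasDerivAt_nonpos_of_left hab (hf _ hc)) ha.not_ge
  rcases hc.2.eq_or_lt with rfl | hcb
  · exact absurd (h.hasDerivAt_nonneg_of_right hab (hf _ hc)) hb.not_ge
  exact (h.isLocalMax (Icc_mem_nhds hac hcb)).hasDerivAt_eq_zero (hf c hc)

lemma weighted_pow_sum_rotation_critical_of_isMaxOn {d : ℕ} (hd : 1 ≤ d) {μ₁ μ₂ a₁ a₂ b₁ b₂ : ℝ}
    (hμ₁ : 0 < μ₁) (hμ₂ : 0 < μ₂) (ha₁ : 0 < a₁) (ha₂ : 0 < a₂) (hb₁ : 0 < b₁) (hb₂ : 0 < b₂)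
    {t₀ : ℝ} (ht₀ : t₀ ∈ Icc 0 (π / 2))
    (hmax : IsMaxOn
      (fun t => μ₁ * (a₁ * cos t + b₁ * sin t) ^ d + μ₂ * (a₂ * cos t + b₂ * sin t) ^ d)
      (Icc 0 (π / 2)) t₀) :
    μ₁ * (a₁ * cos t₀ + b₁ * sin t₀) ^ (d - 1) * (b₁ * cos t₀ - a₁ * sin t₀) +
      μ₂ * (a₂ * cos t₀ + b₂ * sin t₀) ^ (d - 1) * (b₂ * cos t₀ - a₂ * sin t₀) = 0 := by
  have hd' : (0 : ℝ) < d := by exact_mod_cast hd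
  have h := hmax.eq_zero_of_hasDerivAt_of_pos_of_neg ht₀
    (fun t _ => (hasDerivAt_mul_cos_add_mul_sin_pow μ₁ a₁ b₁ d t).fun_add
      (hasDerivAt_mul_cos_add_mul_sin_pow μ₂ a₂ b₂ d t))
    (by simp only [cos_zero, sin_zero, mul_zero, mul_one, add_zero, sub_zero]; positivity)
    (by
      simp only [cos_pi_div_two, sin_pi_div_two, mul_zero, mul_one, zero_add, zero_sub, mul_neg]
      linarith [mul_pos hd' (mul_pos (mul_pos hμ₁ (pow_pos hb₁ (d - 1))) ha₁),
        mul_pos hd' (mul_pos (mul_pos hμ₂ (pow_pos hb₂ (d - 1))) ha₂)])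
  rw [← mul_add] at h
  exact (mul_eq_zero.1 h).resolve_left hd'.ne'

lemma weighted_pow_sum_nonneg_of_abs_le {w₁ w₂ x y : ℝ} (hw₁ : 0 ≤ w₁) (hw₂ : 0 ≤ w₂)
    (hyx : |y| ≤ x) (h : w₁ * x + w₂ * y = 0) (j : ℕ) : 0 ≤ w₁ * x ^ j + w₂ * y ^ j := by
  cases j with
  | zero => simpa using add_nonneg hw₁ hw₂
  | succ k =>
    have hyk : y ^ k ≤ x ^ k := calc
      y ^ k ≤ |y| ^ k := (le_abs_self _).trans (abs_pow y k).le
      _ ≤ x ^ k := pow_le_pow_left₀ (abs_nonneg y) hyx k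
    calc 0 ≤ w₁ * x * (x ^ k - y ^ k) :=
          mul_nonneg (mul_nonneg hw₁ ((abs_nonneg y).trans hyx)) (sub_nonneg.2 hyk)
      _ = w₁ * x ^ (k + 1) + w₂ * y ^ (k + 1) := by linear_combination (-y ^ k) * h

lemma weighted_pow_sum_sign_pattern {w₁ w₂ x y : ℝ} (hw₁ : 0 < w₁) (hw₂ : 0 < w₂)
    (h : w₁ * x + w₂ * y = 0) :
    (∀ j : ℕ, 0 ≤ w₁ * x ^ j + w₂ * y ^ j) ∨
    (∀ j : ℕ, (Even j → 0 ≤ w₁ * x ^ j + w₂ * y ^ j) ∧ (Odd j → w₁ * x ^ j + w₂ * y ^ j ≤ 0)) := by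
  wlog hx : 0 ≤ x generalizing w₁ w₂ x y
  · have hy : 0 ≤ y := (pos_of_mul_pos_right (by nlinarith) hw₂.le).le
    simpa only [add_comm] using this (x := y) (y := x) hw₂ hw₁ (by linarith) hy
  have hy : y ≤ 0 := by nlinarith
  rcases le_total 0 (x + y) with hxy | hxy
  · exact .inl <| weighted_pow_sum_nonneg_of_abs_le hw₁.le hw₂.le
      (abs_le.2 ⟨by linarith, by linarith⟩) h
  · refine .inr fun j => ?_
    have hneg := weighted_pow_sum_nonneg_of_abs_le hw₂.le hw₁.le (x := -y) (y := -x)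
      (abs_le.2 ⟨by linarith, by linarith⟩) (by linarith) j
    refine ⟨fun hj => ?_, fun hj => ?_⟩
    · rw [hj.neg_pow, hj.neg_pow] at hneg; linarith
    · rw [hj.neg_pow, hj.neg_pow] at hneg; linarith

lemma mul_pow_sub_mul_pow_eq {d j : ℕ} (hj : j ≤ d) (μ : ℝ) {A : ℝ} (hA : A ≠ 0) (B : ℝ) :
    μ * A ^ (d - j) * B ^ j = μ * A ^ d * (B / A) ^ j := by
  obtain ⟨k, rfl⟩ := Nat.exists_eq_add_of_le hj
  rw [Nat.add_sub_cancel_left, div_pow, pow_add]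
  field_simp

lemma sign_pattern_of_sum_eq_zero {d : ℕ} (hd : 1 ≤ d) {μ₁ μ₂ A₁ A₂ B₁ B₂ : ℝ}
    (hμ₁ : 0 < μ₁) (hμ₂ : 0 < μ₂) (hA₁ : 0 < A₁) (hA₂ : 0 < A₂)
    (h : μ₁ * A₁ ^ (d - 1) * B₁ + μ₂ * A₂ ^ (d - 1) * B₂ = 0) :
    (∀ j ≤ d, 0 ≤ μ₁ * A₁ ^ (d - j) * B₁ ^ j + μ₂ * A₂ ^ (d - j) * B₂ ^ j) ∨
    (∀ j ≤ d,
      (Even j → 0 ≤ μ₁ * A₁ ^ (d - j) * B₁ ^ j + μ₂ * A₂ ^ (d - j) * B₂ ^ j) ∧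
      (Odd j → μ₁ * A₁ ^ (d - j) * B₁ ^ j + μ₂ * A₂ ^ (d - j) * B₂ ^ j ≤ 0)) := by
  have hom : ∀ j ≤ d, μ₁ * A₁ ^ (d - j) * B₁ ^ j + μ₂ * A₂ ^ (d - j) * B₂ ^ j =
      μ₁ * A₁ ^ d * (B₁ / A₁) ^ j + μ₂ * A₂ ^ d * (B₂ / A₂) ^ j := fun j hj => by
    rw [mul_pow_sub_mul_pow_eq hj μ₁ hA₁.ne', mul_pow_sub_mul_pow_eq hj μ₂ hA₂.ne']
  rw [← pow_one B₁, ← pow_one B₂, hom 1 hd, pow_one, pow_one] at h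
  rcases weighted_pow_sum_sign_pattern (by positivity) (by positivity) h with h' | h'
  · exact .inl fun j hj => hom j hj ▸ h' j
  · exact .inr fun j hj => hom j hj ▸ h' j

theorem stmt_14 (d : ℕ) (hd : 1 ≤ d) (μ₁ μ₂ a₁ a₂ b₁ b₂ : ℝ)
    (hμ₁ : 0 < μ₁) (hμ₂ : 0 < μ₂) (ha₁ : 0 < a₁) (ha₂ : 0 < a₂)
    (hb₁ : 0 < b₁) (hb₂ : 0 < b₂) (t₀ : ℝ) (ht₀ : t₀ ∈ Set.Icc 0 (π / 2))
    (hmax : ∀ t ∈ Set.Icc (0 : ℝ) (π / 2),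
      μ₁ * (a₁ * cos t + b₁ * sin t) ^ d + μ₂ * (a₂ * cos t + b₂ * sin t) ^ d ≤
        μ₁ * (a₁ * cos t₀ + b₁ * sin t₀) ^ d + μ₂ * (a₂ * cos t₀ + b₂ * sin t₀) ^ d) :
    (μ₁ * (a₁ * cos t₀ + b₁ * sin t₀) ^ (d - 1) * (b₁ * cos t₀ - a₁ * sin t₀) +
      μ₂ * (a₂ * cos t₀ + b₂ * sin t₀) ^ (d - 1) * (b₂ * cos t₀ - a₂ * sin t₀) = 0) ∧
    ((∀ j ≤ d, 0 ≤ μ₁ * (a₁ * cos t₀ + b₁ * sin t₀) ^ (d - j) * (b₁ * cos t₀ - a₁ * sin t₀) ^ j +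
        μ₂ * (a₂ * cos t₀ + b₂ * sin t₀) ^ (d - j) * (b₂ * cos t₀ - a₂ * sin t₀) ^ j) ∨
     (∀ j ≤ d,
        (Even j → 0 ≤ μ₁ * (a₁ * cos t₀ + b₁ * sin t₀) ^ (d - j) *
            (b₁ * cos t₀ - a₁ * sin t₀) ^ j +
          μ₂ * (a₂ * cos t₀ + b₂ * sin t₀) ^ (d - j) * (b₂ * cos t₀ - a₂ * sin t₀) ^ j) ∧
        (Odd j → μ₁ * (a₁ * cos t₀ + b₁ * sin t₀) ^ (d - j) *
            (b₁ * cos t₀ - a₁ * sin t₀) ^ j +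
          μ₂ * (a₂ * cos t₀ + b₂ * sin t₀) ^ (d - j) * (b₂ * cos t₀ - a₂ * sin t₀) ^ j ≤ 0))) := by
  have hr₁ := weighted_pow_sum_rotation_critical_of_isMaxOn hd hμ₁ hμ₂ ha₁ ha₂ hb₁ hb₂ ht₀
    fun t ht => hmax t ht
  exact ⟨hr₁, sign_pattern_of_sum_eq_zero hd hμ₁ hμ₂ (mul_cos_add_mul_sin_pos ha₁ hb₁ ht₀)
    (mul_cos_add_mul_sin_pos ha₂ hb₂ ht₀) hr₁⟩
end

section
/- Let a₁, a₂, b₁, b₂ ∈ ℝ, μ₁, μ₂ > 0, and suppose there exists t₁ with a₁(t₁) = (μ₂/μ₁)^{1/d}·(−b₂(t₁)) and −b₁(t₁) = (μ₂/μ₁)^{1/d}·a₂(t₁), where a_i(t) = a_i cos t + b_i sin t, b_i(t) = b_i cos t − a_i sin t. Set t₂ = 2t₁ − π/2. Then for every t ∈ ℝ: μ₁ a₁(t)^d = μ₂ a₂(t₂ − t)^d and μ₂ a₂(t)^d = μ₁ a₁(t₂ − t)^d; in particular the function Φ(t) = μ₁a₁(t)^d + μ₂a₂(t)^d satisfies Φ(t)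 = Φ(t₂ − t) for all t. -/
open Real

theorem stmt_15 (d : ℕ) (hd : 1 ≤ d) (a₁ a₂ b₁ b₂ μ₁ μ₂ : ℝ)
    (hμ₁ : 0 < μ₁) (hμ₂ : 0 < μ₂) (t₁ : ℝ)
    (h1 : a₁ * cos t₁ + b₁ * sin t₁ =
      (μ₂ / μ₁) ^ ((1 : ℝ) / d) * (-(b₂ * cos t₁ - a₂ * sin t₁)))
    (h2 : -(b₁ * cos t₁ - a₁ * sin t₁) =
      (μ₂ / μ₁) ^ ((1 : ℝ) / d) * (a₂ * cos t₁ + b₂ * sin t₁)) :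
    ∀ t : ℝ,
      μ₁ * (a₁ * cos t + b₁ * sin t) ^ d =
        μ₂ * (a₂ * cos (2 * t₁ - π / 2 - t) + b₂ * sin (2 * t₁ - π / 2 - t)) ^ d ∧
      μ₂ * (a₂ * cos t + b₂ * sin t) ^ d =
        μ₁ * (a₁ * cos (2 * t₁ - π / 2 - t) + b₁ * sin (2 * t₁ - π / 2 - t)) ^ d ∧
      μ₁ * (a₁ * cos t + b₁ * sin t) ^ d + μ₂ * (a₂ * cos t + b₂ * sin t) ^ d =
        μ₁ * (a₁ * cos (2 * t₁ - π / 2 - t) + b₁ * sin (2 * t₁ - π / 2 - t)) ^ d +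
          μ₂ * (a₂ * cos (2 * t₁ - π / 2 - t) + b₂ * sin (2 * t₁ - π / 2 - t)) ^ d := by
  set c : ℝ := (μ₂ / μ₁) ^ ((1 : ℝ) / d) with hc
  have hd0 : (d : ℝ) ≠ 0 := Nat.cast_ne_zero.mpr (by omega)
  have hdiv : (0 : ℝ) < μ₂ / μ₁ := div_pos hμ₂ hμ₁
  have hcd : c ^ d = μ₂ / μ₁ := by
    rw [hc, ← Real.rpow_natCast (_ ^ _) d, ← Real.rpow_mul hdiv.le]
    rw [one_div, inv_mul_cancel₀ hd0, Real.rpow_one]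
  -- key identity: a₁(t) = c * a₂(T - t) for all t, with T = 2t₁ - π/2
  have key : ∀ t : ℝ, a₁ * cos t + b₁ * sin t =
      c * (a₂ * cos (2 * t₁ - π / 2 - t) + b₂ * sin (2 * t₁ - π / 2 - t)) := by
    intro t
    have e1 : cos (2 * t₁ - π / 2 - t) = sin (2 * t₁ - t) := by
      rw [show 2 * t₁ - π / 2 - t = (2 * t₁ - t) - π / 2 by ring, cos_sub,
        cos_pi_div_two, sin_pi_div_two]; ring
    have e2 : sin (2 * t₁ - π / 2 - t) = -cos (2 * t₁ - t) := by
      rw [show 2 * t₁ - π / 2 - t = (2 * t₁ - t) - π / 2 by ring, sin_sub,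
        cos_pi_div_two, sin_pi_div_two]; ring
    rw [e1, e2, sin_sub, cos_sub, sin_two_mul, cos_two_mul]
    have hpyth := sin_sq_add_cos_sq t₁
    linear_combination (cos t₁ * cos t + sin t₁ * sin t) * h1 +
      (sin t₁ * cos t - cos t₁ * sin t) * h2 +
      c * (a₂ * sin t + b₂ * cos t) * hpyth - (a₁ * cos t + b₁ * sin t) * hpyth
  have key2 : ∀ t : ℝ, a₂ * cos t + b₂ * sin t =
      (a₂ * cos (2 * t₁ - π / 2 - (2 * t₁ - π / 2 - t)) +
        b₂ * sin (2 * t₁ - π / 2 - (2 * t₁ - π / 2 - t))) := by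
    intro t
    rw [show 2 * t₁ - π / 2 - (2 * t₁ - π / 2 - t) = t by ring]
  intro t
  have k1 := key t
  have k2 := key (2 * t₁ - π / 2 - t)
  rw [show 2 * t₁ - π / 2 - (2 * t₁ - π / 2 - t) = t by ring] at k2
  have goal1 : μ₁ * (a₁ * cos t + b₁ * sin t) ^ d =
      μ₂ * (a₂ * cos (2 * t₁ - π / 2 - t) + b₂ * sin (2 * t₁ - π / 2 - t)) ^ d := by
    rw [k1, mul_pow, ← mul_assoc, hcd]
    field_simp
  have goal2 : μ₂ * (a₂ * cos t + b₂ * sin t) ^ d =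
      μ₁ * (a₁ * cos (2 * t₁ - π / 2 - t) + b₁ * sin (2 * t₁ - π / 2 - t)) ^ d := by
    rw [k2, mul_pow, ← mul_assoc, hcd]
    field_simp
  exact ⟨goal1, goal2, by linarith⟩
end

section
/- Let d ≥ 3, q ≥ 2, w ≥ 0 and define Φ(t) = (√(1+w/q) cos t + √((q−1)w/q) sin t)^d + (q−1)(√(1+w/q) cos t − √(w/(q(q−1))) sin t)^d. Then Φ'(0) = 0 and Φ''(0) = d·(1+w/q)^{d/2−1}·((d−2)w − q). In particular, if w < q/(d−2) then Φ has a strict local maximum at t = 0, and if w > q/(d−2) then Φ has a strict local minimum at t = 0. -/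
/-!
With `a = √(1 + w/q)` and `c = √(w/(q(q-1)))` one has `√((q-1)w/q) = (q-1)c`, so
`Φ = u^d + (q-1) v^d` for `u = a cos + (q-1)c sin` and `v = a cos - c sin`. Both satisfy
`u'' = -u`, whence `Φ'(0) = d a^(d-1) ((q-1)c - (q-1)c) = 0` and
`Φ''(0) = d(d-1) a^(d-2) q(q-1)c² - q d a^d = d a^(d-2) ((d-2)w - q)`.
The extremum claims are the second-derivative test in strict form: `Φ'` changes sign at `0`,
so `Φ` is strictly monotone on either side of `0`.
-/

open Real Set Filter Topology

section StrictSecondDerivativeTest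

variable {f : ℝ → ℝ} {x₀ : ℝ}

theorem eventually_nhdsGT_lt_of_deriv_neg (hc : ContinuousAt f x₀)
    (hd : ∀ᶠ x in 𝓝[>] x₀, deriv f x < 0) : ∀ᶠ x in 𝓝[>] x₀, f x < f x₀ := by
  obtain ⟨c, hc₀, hneg⟩ := (nhdsGT_basis x₀).eventually_iff.mp hd
  have hcont : ContinuousOn f (Ico x₀ c) := fun x hx ↦ by
    rcases hx.1.eq_or_lt with rfl | hx₀
    · exact hc.continuousWithinAt
    · exact (differentiableAt_of_deriv_ne_zero (hneg ⟨hx₀, hx.2⟩).ne).continuousAt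
        |>.continuousWithinAt
  have hanti : StrictAntiOn f (Ico x₀ c) :=
    strictAntiOn_of_deriv_neg (convex_Ico x₀ c) hcont (by simpa only [interior_Ico] using hneg)
  filter_upwards [Ioo_mem_nhdsGT hc₀] with x hx
  exact hanti (left_mem_Ico.2 hc₀) (Ioo_subset_Ico_self hx) hx.1

theorem eventually_nhdsLT_lt_of_deriv_pos (hc : ContinuousAt f x₀)
    (hd : ∀ᶠ x in 𝓝[<] x₀, 0 < deriv f x) : ∀ᶠ x in 𝓝[<] x₀, f x < f x₀ := by
  obtain ⟨a, ha₀, hpos⟩ := (nhdsLT_basis x₀).eventually_iff.mp hd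
  have hcont : ContinuousOn f (Ioc a x₀) := fun x hx ↦ by
    rcases hx.2.eq_or_lt with rfl | hx₀
    · exact hc.continuousWithinAt
    · exact (differentiableAt_of_deriv_ne_zero (hpos ⟨hx.1, hx₀⟩).ne').continuousAt
        |>.continuousWithinAt
  have hmono : StrictMonoOn f (Ioc a x₀) :=
    strictMonoOn_of_deriv_pos (convex_Ioc a x₀) hcont (by simpa only [interior_Ioc] using hpos)
  filter_upwards [Ioo_mem_nhdsLT ha₀] with x hx
  exact hmono (Ioo_subset_Ioc_self hx) (right_mem_Ioc.2 ha₀) hx.2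

theorem eventually_nhdsNE_lt_of_deriv_deriv_neg (hf : deriv (deriv f) x₀ < 0)
    (hd : deriv f x₀ = 0) (hc : ContinuousAt f x₀) : ∀ᶠ x in 𝓝[≠] x₀, f x < f x₀ := by
  have hsign := (eventually_nhdsWithin_sign_eq_of_deriv_neg hf hd).filter_mono
    (nhdsWithin_le_nhds (s := {x₀}ᶜ))
  rw [← nhdsLT_sup_nhdsGT, eventually_sup]
  exact ⟨eventually_nhdsLT_lt_of_deriv_pos hc (deriv_pos_left_of_sign_deriv hsign),
    eventually_nhdsGT_lt_of_deriv_neg hc (deriv_neg_right_of_sign_deriv hsign)⟩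

theorem eventually_nhdsNE_gt_of_deriv_deriv_pos (hf : 0 < deriv (deriv f) x₀)
    (hd : deriv f x₀ = 0) (hc : ContinuousAt f x₀) : ∀ᶠ x in 𝓝[≠] x₀, f x₀ < f x := by
  simpa using eventually_nhdsNE_lt_of_deriv_deriv_neg (f := -f) (by simpa [deriv.neg'])
    (by simpa [deriv.neg']) hc.neg

end StrictSecondDerivativeTest

theorem sqrt_mul_div_eq_mul_sqrt {m : ℝ} (hm : 0 ≤ m) (x q : ℝ) :
    √(m * x / q) = m * √(x / (q * m)) := by
  rcases hm.eq_or_lt with rfl | hm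
  · simp
  rw [show m * x / q = m ^ 2 * (x / (q * m)) by field_simp, sqrt_mul (sq_nonneg m),
    sqrt_sq hm.le]

theorem sqrt_pow_sub_two_eq_rpow {x : ℝ} (hx : 0 ≤ x) {n : ℕ} (hn : 2 ≤ n) :
    √x ^ (n - 2) = x ^ ((n : ℝ) / 2 - 1) := by
  rw [← rpow_natCast, Nat.cast_sub hn, ← rpow_div_two_eq_sqrt _ hx]
  ring_nf

section CosSinPow

variable (a b c m : ℝ) (n : ℕ)

noncomputable def cosSinPow (t : ℝ) : ℝ := (a * cos t + b * sin t) ^ n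

theorem hasDerivAt_cosSinPow (t : ℝ) :
    HasDerivAt (cosSinPow a b n)
      (n * (a * cos t + b * sin t) ^ (n - 1) * (b * cos t - a * sin t)) t := by
  have hu := ((hasDerivAt_cos t).const_mul a).add ((hasDerivAt_sin t).const_mul b)
  refine (hu.pow n).congr_deriv ?_
  simp only [Pi.add_apply]
  ring

theorem deriv_cosSinPow :
    deriv (cosSinPow a b n) =
      fun t ↦ n * (a * cos t + b * sin t) ^ (n - 1) * (b * cos t - a * sin t) :=
  funext fun t ↦ (hasDerivAt_cosSinPow a b n t).deriv

theorem hasDerivAt_deriv_cosSinPow_zero :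
    HasDerivAt (deriv (cosSinPow a b n)) (n * (n - 1) * a ^ (n - 2) * b ^ 2 - n * a ^ n) 0 := by
  rw [deriv_cosSinPow]
  rcases n with _ | n
  · simpa using hasDerivAt_const (0 : ℝ) (0 : ℝ)
  have hu := ((hasDerivAt_cos 0).const_mul a).add ((hasDerivAt_sin 0).const_mul b)
  have hv := ((hasDerivAt_cos 0).const_mul b).sub ((hasDerivAt_sin 0).const_mul a)
  refine (((hu.pow n).const_mul ((n + 1 : ℕ) : ℝ)).mul hv).congr_deriv ?_
  rcases n with _ | n
  · simp
  · simp only [Pi.add_apply, Pi.sub_apply, Pi.pow_apply, cos_zero, sin_zero]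
    push_cast
    ring

theorem hasDerivAt_cosSinPow_add_const_mul (t : ℝ) :
    HasDerivAt (fun t ↦ cosSinPow a (m * c) n t + m * cosSinPow a (-c) n t)
      (deriv (cosSinPow a (m * c) n) t + m * deriv (cosSinPow a (-c) n) t) t := by
  rw [deriv_cosSinPow, deriv_cosSinPow]
  exact (hasDerivAt_cosSinPow _ _ n t).add ((hasDerivAt_cosSinPow _ _ n t).const_mul m)

theorem deriv_cosSinPow_add_const_mul_zero :
    deriv (fun t ↦ cosSinPow a (m * c) n t + m * cosSinPow a (-c) n t) 0 = 0 := by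
  rw [(hasDerivAt_cosSinPow_add_const_mul a c m n 0).deriv, deriv_cosSinPow, deriv_cosSinPow]
  simp only [cos_zero, sin_zero]
  ring

theorem deriv_deriv_cosSinPow_add_const_mul_zero :
    deriv (deriv (fun t ↦ cosSinPow a (m * c) n t + m * cosSinPow a (-c) n t)) 0 =
      n * (n - 1) * a ^ (n - 2) * (m * (m + 1) * c ^ 2) - (m + 1) * n * a ^ n := by
  have h : HasDerivAt (fun t ↦ deriv (cosSinPow a (m * c) n) t + m * deriv (cosSinPow a (-c) n) t)
      _ 0 := (hasDerivAt_deriv_cosSinPow_zero a _ n).add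
        ((hasDerivAt_deriv_cosSinPow_zero a _ n).const_mul m)
  rw [funext fun t ↦ (hasDerivAt_cosSinPow_add_const_mul a c m n t).deriv, h.deriv]
  ring

end CosSinPow

theorem stmt_17 (d : ℕ) (hd : 3 ≤ d) (q w : ℝ) (hq : 2 ≤ q) (hw : 0 ≤ w)
    (Φ : ℝ → ℝ)
    (hΦ : Φ = fun t =>
      (Real.sqrt (1 + w / q) * cos t + Real.sqrt ((q - 1) * w / q) * sin t) ^ d +
        (q - 1) * (Real.sqrt (1 + w / q) * cos t -
          Real.sqrt (w / (q * (q - 1))) * sin t) ^ d) :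
    deriv Φ 0 = 0 ∧
    deriv (deriv Φ) 0 = d * (1 + w / q) ^ ((d : ℝ) / 2 - 1) * ((d - 2) * w - q) ∧
    (w < q / ((d : ℝ) - 2) → ∀ᶠ t in nhdsWithin 0 {(0 : ℝ)}ᶜ, Φ t < Φ 0) ∧
    (q / ((d : ℝ) - 2) < w → ∀ᶠ t in nhdsWithin 0 {(0 : ℝ)}ᶜ, Φ 0 < Φ t) := by
  have hq1 : 0 < q - 1 := by linarith
  set a := √(1 + w / q)
  set c := √(w / (q * (q - 1)))
  have hΦeq : Φ = fun t ↦ cosSinPow a ((q - 1) * c) d t + (q - 1) * cosSinPow a (-c) d t := by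
    simp only [hΦ, sqrt_mul_div_eq_mul_sqrt hq1.le, cosSinPow, neg_mul,
      ← sub_eq_add_neg]
    rfl
  have ha : q * a ^ 2 = q + w := by
    rw [sq_sqrt (by positivity)]
    field_simp
  have hc : q * (q - 1) * c ^ 2 = w := by
    rw [sq_sqrt (by positivity)]
    field_simp
  have hΦ'0 : deriv Φ 0 = 0 := hΦeq ▸ deriv_cosSinPow_add_const_mul_zero a c _ d
  have hΦ''0 : deriv (deriv Φ) 0 = d * (1 + w / q) ^ ((d : ℝ) / 2 - 1) * ((d - 2) * w - q) := by
    rw [hΦeq, deriv_deriv_cosSinPow_add_const_mul_zero, ← sqrt_pow_sub_two_eq_rpow (by positivity)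
      (by omega), show a ^ d = a ^ (d - 2) * a ^ 2 by rw [← pow_add]; congr 1; omega]
    linear_combination (d : ℝ) * (d - 1) * a ^ (d - 2) * hc - d * a ^ (d - 2) * ha
  have hΦc : ContinuousAt Φ 0 := hΦeq ▸ (hasDerivAt_cosSinPow_add_const_mul a c _ d 0).continuousAt
  have hA : 0 < d * (1 + w / q) ^ ((d : ℝ) / 2 - 1) := by positivity
  have hd2 : (0 : ℝ) < d - 2 := sub_pos.2 (by exact_mod_cast hd)
  refine ⟨hΦ'0, hΦ''0, fun hlt ↦ ?_, fun hgt ↦ ?_⟩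
  · refine eventually_nhdsNE_lt_of_deriv_deriv_neg ?_ hΦ'0 hΦc
    rw [hΦ''0]
    exact mul_neg_of_pos_of_neg hA (by rw [lt_div_iff₀ hd2] at hlt; linarith)
  · refine eventually_nhdsNE_gt_of_deriv_deriv_pos ?_ hΦ'0 hΦc
    rw [hΦ''0]
    exact mul_pos hA (by rw [div_lt_iff₀ hd2] at hgt; linarith)
end

section
/- Let d ≥ 3, q ≥ 2 and define h(w,t) = (cos t + √((q−1)w/(q+w))·sin t)^d + (q−1)·(cos t − √(w/((q−1)(q+w)))·sin t)^d. Then for every fixed t ∈ (0, π/2), the function w ↦ h(w,t) is strictly increasing on (0,∞). -/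
/-! With `s = √((q-1)w/(q+w))` the second square root equals `s/(q-1)`, so with
`a = q - 1 ≥ 1`, `c = cos t`, `σ = sin t` we get `h(w,t) = g(sσ)` for
`g u = (c+u)^d + a(c-u/a)^d`. Since `g' u = d((c+u)^(d-1) - (c-u/a)^(d-1))` and
`|c - u/a| < c + u` for `u > 0`, `g` is strictly increasing on `[0,∞)`; and `s` is
strictly increasing in `w`. -/

open Real Set

lemma pow_lt_pow_of_abs_lt {R : Type*} [Ring R] [LinearOrder R] [IsStrictOrderedRing R]
    {x y : R} {n : ℕ} (hn : n ≠ 0) (h : |x| < y) : x ^ n < y ^ n :=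
  calc x ^ n ≤ |x| ^ n := by rw [← abs_pow]; exact le_abs_self _
    _ < y ^ n := pow_lt_pow_left₀ h (abs_nonneg x) hn

lemma abs_sub_div_lt_add {K : Type*} [Field K] [LinearOrder K] [IsStrictOrderedRing K]
    {a c u : K} (ha : 1 ≤ a) (hc : 0 < c) (hu : 0 < u) :
    |c - u / a| < c + u := by
  have hdiv_le : u / a ≤ u := div_le_self hu.le ha
  have hdiv_pos : 0 < u / a := div_pos hu (by linarith)
  rw [abs_lt]
  constructor <;> linarith

lemma hasDerivAt_add_pow_add_mul_sub_div_pow {a : ℝ} (ha : a ≠ 0) (c u : ℝ) (n : ℕ) :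
    HasDerivAt (fun u => (c + u) ^ n + a * (c - u / a) ^ n)
      (n * ((c + u) ^ (n - 1) - (c - u / a) ^ (n - 1))) u := by
  have hplus := ((hasDerivAt_id' u).const_add c).fun_pow n
  have hminus := ((((hasDerivAt_id' u).div_const a).const_sub c).fun_pow n).const_mul a
  refine (hplus.add hminus).congr_deriv ?_
  field_simp
  ring

lemma strictMonoOn_add_pow_add_mul_sub_div_pow {a c : ℝ} {n : ℕ} (ha : 1 ≤ a) (hc : 0 < c)
    (hn : 2 ≤ n) : StrictMonoOn (fun u => (c + u) ^ n + a * (c - u / a) ^ n) (Ici 0) := by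
  have ha0 : a ≠ 0 := by positivity
  refine strictMonoOn_of_deriv_pos (convex_Ici 0) (by fun_prop) fun u hu => ?_
  rw [interior_Ici] at hu
  rw [(hasDerivAt_add_pow_add_mul_sub_div_pow ha0 c u n).deriv]
  have hpow := pow_lt_pow_of_abs_lt (by omega : n - 1 ≠ 0) (abs_sub_div_lt_add ha hc hu)
  have hn0 : (0 : ℝ) < n := by exact_mod_cast (by omega : 0 < n)
  exact mul_pos hn0 (sub_pos.mpr hpow)

lemma sqrt_mul_div_eq_mul_sqrt_div {a : ℝ} (ha : 0 < a) (x y : ℝ) :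
    √(a * x / y) = a * √(x / (a * y)) := by
  rw [show a * x / y = a ^ 2 * (x / (a * y)) by field_simp, sqrt_mul (sq_nonneg a),
    sqrt_sq ha.le]

lemma strictMonoOn_sqrt_mul_div_add {a q : ℝ} (ha : 0 < a) (hq : 0 < q) :
    StrictMonoOn (fun w => √(a * w / (q + w))) (Ioi 0) := by
  intro w₁ hw₁ w₂ hw₂ hlt
  simp only [mem_Ioi] at hw₁ hw₂
  apply sqrt_lt_sqrt (by positivity)
  rw [div_lt_div_iff₀ (by linarith) (by linarith)]
  nlinarith [mul_lt_mul_of_pos_left hlt (mul_pos ha hq)]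

theorem stmt_18 (d : ℕ) (hd : 3 ≤ d) (q : ℝ) (hq : 2 ≤ q) (t : ℝ)
    (ht : t ∈ Set.Ioo 0 (π / 2)) :
    StrictMonoOn (fun w : ℝ =>
      (cos t + Real.sqrt ((q - 1) * w / (q + w)) * sin t) ^ d +
        (q - 1) * (cos t - Real.sqrt (w / ((q - 1) * (q + w))) * sin t) ^ d)
      (Set.Ioi 0) := by
  obtain ⟨ht₀, ht₁⟩ := ht
  have hcos : 0 < cos t := cos_pos_of_mem_Ioo ⟨by linarith [pi_pos], ht₁⟩
  have hsin : 0 < sin t := sin_pos_of_pos_of_lt_pi ht₀ (by linarith [pi_pos])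
  have ha : (0 : ℝ) < q - 1 := by linarith
  have hg := strictMonoOn_add_pow_add_mul_sub_div_pow (by linarith : 1 ≤ q - 1) hcos
    (by omega : 2 ≤ d)
  have hs := strictMonoOn_sqrt_mul_div_add ha (by linarith : (0 : ℝ) < q)
  have hsecond : ∀ w, √(w / ((q - 1) * (q + w))) * sin t =
      √((q - 1) * w / (q + w)) * sin t / (q - 1) := fun w => by
    rw [sqrt_mul_div_eq_mul_sqrt_div ha]
    field_simp
  intro w₁ hw₁ w₂ hw₂ hlt
  simp only [hsecond]
  exact hg (mul_nonneg (sqrt_nonneg _) hsin.le) (mul_nonneg (sqrt_nonneg _) hsin.le)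
    (mul_lt_mul_of_pos_right (hs hw₁ hw₂ hlt) hsin)
end
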